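/- Under the hypotheses of the previous setting, additionally assume ‖H‖ ≤ κ_H, ‖J‖ ≤ κ_J, and ‖(JJᵀ)⁻¹‖ ≤ κ_σ (with JJᵀ invertible). Then the dual solutions satisfy ‖ȳ - y‖ ≤ κ_σ κ_J (1 + κ_H ζ⁻¹) ‖ḡ - g‖. -/

import Mathlib

open scoped RealInnerProductSpace
open ContinuousLinearMap

/-!
The primal difference `u = d̄ - d` lies in `ker J` and solves `H u + Jᵀ (ȳ - y) = -(ḡ - g)`.
Pairing this with `u` kills the `Jᵀ` term, so coercivity of `H` on `ker J` gives
`‖u‖ ≤ ζ⁻¹ ‖ḡ - g‖`. Applying `(JJᵀ)⁻¹ J` to the same equation expresses `ȳ - y` through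
`ḡ - g` and `H u`, and the operator-norm bounds finish the estimate.
-/

section KKT

variable {E F : Type*} [NormedAddCommGroup E] [InnerProductSpace ℝ E]

lemma norm_le_inv_mul_norm_of_mul_sq_le_inner {ζ : ℝ} (hζ : 0 < ζ) {u w : E}
    (h : ζ * ‖u‖ ^ 2 ≤ ⟪u, w⟫) : ‖u‖ ≤ ζ⁻¹ * ‖w‖ := by
  have hcs : ζ * ‖u‖ * ‖u‖ ≤ ‖w‖ * ‖u‖ := by
    nlinarith [real_inner_le_norm u w]
  rw [le_inv_mul_iff₀ hζ]
  rcases (norm_nonneg u).eq_or_lt with hu | hu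
  · rw [← hu, mul_zero]
    exact norm_nonneg w
  · exact le_of_mul_le_mul_right hcs hu

variable [CompleteSpace E] [NormedAddCommGroup F] [InnerProductSpace ℝ F] [CompleteSpace F]
  {H : E →L[ℝ] E} {J : E →L[ℝ] F} {u w : E} {v : F}

lemma norm_le_of_kkt_of_mem_ker {ζ : ℝ} (hζ : 0 < ζ)
    (hpos : ∀ u, J u = 0 → ζ * ‖u‖ ^ 2 ≤ ⟪u, H u⟫)
    (hJu : J u = 0) (hkkt : H u + adjoint J v = w) : ‖u‖ ≤ ζ⁻¹ * ‖w‖ := by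
  have hinner : ⟪u, H u⟫ = ⟪u, w⟫ := by
    rw [← hkkt, inner_add_right, adjoint_inner_right, hJu, inner_zero_left, add_zero]
  exact norm_le_inv_mul_norm_of_mul_sq_le_inner hζ (hinner ▸ hpos u hJu)

lemma eq_of_kkt_of_leftInverse {K : F →L[ℝ] F}
    (hK : K.comp (J.comp (adjoint J)) = ContinuousLinearMap.id ℝ F)
    (hkkt : H u + adjoint J v = w) : v = K (J (w - H u)) := by
  rw [← hkkt, add_sub_cancel_left]
  exact (congrArg (· v) hK).symm

lemma norm_le_of_kkt {ζ : ℝ} (hζ : 0 < ζ)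
    (hpos : ∀ u, J u = 0 → ζ * ‖u‖ ^ 2 ≤ ⟪u, H u⟫)
    {κH κJ κσ : ℝ} (hH : ‖H‖ ≤ κH) (hJ : ‖J‖ ≤ κJ)
    {K : F →L[ℝ] F} (hK : K.comp (J.comp (adjoint J)) = ContinuousLinearMap.id ℝ F)
    (hKnorm : ‖K‖ ≤ κσ)
    (hJu : J u = 0) (hkkt : H u + adjoint J v = w) :
    ‖v‖ ≤ κσ * κJ * (1 + κH * ζ⁻¹) * ‖w‖ := by
  have hu := norm_le_of_kkt_of_mem_ker hζ hpos hJu hkkt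
  have hκσ : 0 ≤ κσ := (norm_nonneg K).trans hKnorm
  have hκJ : 0 ≤ κJ := (norm_nonneg J).trans hJ
  have hκH : 0 ≤ κH := (norm_nonneg H).trans hH
  calc ‖v‖ = ‖K (J (w - H u))‖ := by rw [← eq_of_kkt_of_leftInverse hK hkkt]
    _ ≤ ‖K‖ * (‖J‖ * (‖w‖ + ‖H‖ * ‖u‖)) := by
      refine K.le_opNorm_of_le (J.le_opNorm_of_le ?_)
      exact (norm_sub_le _ _).trans (add_le_add_right (H.le_opNorm u) _)
    _ ≤ κσ * (κJ * (‖w‖ + κH * (ζ⁻¹ * ‖w‖))) := by gcongr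
    _ = κσ * κJ * (1 + κH * ζ⁻¹) * ‖w‖ := by ring

end KKT

theorem stmt4_general {n m : ℕ}
    (H : EuclideanSpace ℝ (Fin n) →L[ℝ] EuclideanSpace ℝ (Fin n))
    (J : EuclideanSpace ℝ (Fin n) →L[ℝ] EuclideanSpace ℝ (Fin m))
    (ζ : ℝ) (hζ : 0 < ζ)
    (hpos : ∀ u, J u = 0 → ζ * ‖u‖ ^ 2 ≤ ⟪u, H u⟫)
    (κH κJ κσ : ℝ) (hH : ‖H‖ ≤ κH) (hJ : ‖J‖ ≤ κJ)
    (K : EuclideanSpace ℝ (Fin m) →L[ℝ] EuclideanSpace ℝ (Fin m))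
    (hK1 : K.comp (J.comp (adjoint J)) = ContinuousLinearMap.id ℝ _)
    (hKnorm : ‖K‖ ≤ κσ)
    (gbar g dbar d : EuclideanSpace ℝ (Fin n)) (c ybar y : EuclideanSpace ℝ (Fin m))
    (h1bar : H dbar + adjoint J ybar = -gbar) (h2bar : J dbar = -c)
    (h1 : H d + adjoint J y = -g) (h2 : J d = -c) :
    ‖ybar - y‖ ≤ κσ * κJ * (1 + κH * ζ⁻¹) * ‖gbar - g‖ := by
  have hJu : J (dbar - d) = 0 := by rw [map_sub, h2bar, h2, sub_self]
  have hkkt : H (dbar - d) + adjoint J (ybar - y) = -(gbar - g) := by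
    rw [map_sub, map_sub, sub_add_sub_comm, h1bar, h1, neg_sub_neg, neg_sub]
  simpa only [norm_neg] using norm_le_of_kkt hζ hpos hH hJ hK1 hKnorm hJu hkkt

/-- Under the KKT setting of the previous statement, together with `‖H‖ ≤ κ_H`, `‖J‖ ≤ κ_J`,
`JJᵀ` invertible with `‖(JJᵀ)⁻¹‖ ≤ κ_σ`, the dual solutions satisfy
`‖ȳ - y‖ ≤ κ_σ κ_J (1 + κ_H ζ⁻¹) ‖ḡ - g‖`. -/
theorem stmt4 {n m : ℕ}
    (H : EuclideanSpace ℝ (Fin n) →L[ℝ] EuclideanSpace ℝ (Fin n))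
    (J : EuclideanSpace ℝ (Fin n) →L[ℝ] EuclideanSpace ℝ (Fin m))
    (hsymm : ∀ u v, ⟪H u, v⟫ = ⟪u, H v⟫)
    (ζ : ℝ) (hζ : 0 < ζ)
    (hpos : ∀ u, J u = 0 → ζ * ‖u‖ ^ 2 ≤ ⟪u, H u⟫)
    (κH κJ κσ : ℝ) (hH : ‖H‖ ≤ κH) (hJ : ‖J‖ ≤ κJ)
    (K : EuclideanSpace ℝ (Fin m) →L[ℝ] EuclideanSpace ℝ (Fin m))
    (hK1 : K.comp (J.comp (adjoint J)) = ContinuousLinearMap.id ℝ _)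
    (hK2 : (J.comp (adjoint J)).comp K = ContinuousLinearMap.id ℝ _)
    (hKnorm : ‖K‖ ≤ κσ)
    (gbar g dbar d : EuclideanSpace ℝ (Fin n)) (c ybar y : EuclideanSpace ℝ (Fin m))
    (h1bar : H dbar + adjoint J ybar = -gbar) (h2bar : J dbar = -c)
    (h1 : H d + adjoint J y = -g) (h2 : J d = -c) :
    ‖ybar - y‖ ≤ κσ * κJ * (1 + κH * ζ⁻¹) * ‖gbar - g‖ :=
  stmt4_general H J ζ hζ hpos κH κJ κσ hH hJ K hK1 hKnorm gbar g dbar d c ybar y h1bar h2bar h1 h2
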